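/- arXiv:2504.10246 — 3 statements merged into one kernel-verified Lean document; each statement's English description precedes it below -/
import Mathlib

section
/- The union operation preserves the union-find invariant: if ufa_invar l and x < |l| and y < |l|, then ufa_invar (l[rep_of l x := rep_of l y]). -/
/-- Proof terms for equalities. -/
inductive EqPrf (α : Type*) where
  | assm (i : ℕ)
  | refl (x : α)
  | sym (p : EqPrf α)
  | trans (p₁ p₂ : EqPrf α)

/-- The judgment `us ⊢ p : (x, y)`. -/
inductive Proves {α : Type*} (us : List (α × α)) : EqPrf α → α × α → Prop where
  | assm (i : ℕ) (x y : α) (hi : i < us.length) (h : us.get ⟨i, hi⟩ = (x, y)) :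
      Proves us (.assm i) (x, y)
  | refl (x : α) : Proves us (.refl x) (x, x)
  | sym (p : EqPrf α) (x y : α) : Proves us p (x, y) → Proves us (.sym p) (y, x)
  | trans (p₁ p₂ : EqPrf α) (x y z : α) :
      Proves us p₁ (x, y) → Proves us p₂ (y, z) → Proves us (.trans p₁ p₂) (x, z)

/-- Symmetric closure of a relation given as a set of pairs. -/
def symcl {α : Type*} (r : Set (α × α)) : Set (α × α) := r ∪ {p | (p.2, p.1) ∈ r}

/-- Equivalence closure: reflexive transitive closure of the symmetric closure. -/
def equivcl {α : Type*} (r : Set (α × α)) : Set (α × α) :=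
  {p | Relation.ReflTransGen (fun a b => (a, b) ∈ symcl r) p.1 p.2}

/-- Parent pointer of element `i` in the union-find list `l`. -/
def parentOf (l : List ℕ) (i : ℕ) : ℕ := l.getD i 0

/-- Domain (termination) predicate of the representative function. -/
inductive RepOfDom (l : List ℕ) : ℕ → Prop where
  | base (i : ℕ) (h : parentOf l i = i) : RepOfDom l i
  | step (i : ℕ) (h : parentOf l i ≠ i) (ih : RepOfDom l (parentOf l i)) : RepOfDom l i

/-- Fuelled iteration of parent pointers. -/
def repOfAux (l : List ℕ) : ℕ → ℕ → ℕ
  | 0, i => i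
  | n + 1, i => if parentOf l i = i then i else repOfAux l n (parentOf l i)

/-- Representative of `i`: follow parent pointers to a self-loop
(the fuel `l.length` suffices on well-formed structures). -/
def repOf (l : List ℕ) (i : ℕ) : ℕ := repOfAux l l.length i

/-- Union-find invariant. -/
def ufaInvar (l : List ℕ) : Prop := ∀ i < l.length, RepOfDom l i ∧ parentOf l i < l.length

/-- Abstraction: the partial equivalence relation represented by `l`. -/
def ufaα (l : List ℕ) : Set (ℕ × ℕ) :=
  {p | p.1 < l.length ∧ p.2 < l.length ∧ repOf l p.1 = repOf l p.2}

/-- Union operation. -/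
def ufaUnion (l : List ℕ) (x y : ℕ) : List ℕ := l.set (repOf l x) (repOf l y)

/-- Apply a list of unions. -/
def ufaUnions (l : List ℕ) (us : List (ℕ × ℕ)) : List ℕ :=
  us.foldl (fun l p => ufaUnion l p.1 p.2) l

/-- Initial union-find structure on `n` elements. -/
def ufaInit (n : ℕ) : List ℕ := List.range n

/-- Field of a relation given as a set of pairs. -/
def relField (r : Set (ℕ × ℕ)) : Set ℕ := {x | (∃ y, (x, y) ∈ r) ∨ ∃ y, (y, x) ∈ r}

/-- Merging the equivalence classes of `x` and `y` in a partial equivalence relation. -/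
def perUnion (R : Set (ℕ × ℕ)) (x y : ℕ) : Set (ℕ × ℕ) :=
  R ∪ {p | (p.1, x) ∈ R ∧ (y, p.2) ∈ R} ∪ {p | (p.1, y) ∈ R ∧ (x, p.2) ∈ R}

/-- Effective union. -/
def effUnion (l : List ℕ) (a b : ℕ) : Prop :=
  a ∈ relField (ufaα l) ∧ b ∈ relField (ufaα l) ∧ repOf l a ≠ repOf l b

/-- Effective list of unions. -/
def effUnions : List ℕ → List (ℕ × ℕ) → Prop
  | _, [] => True
  | l, (a, b) :: us => effUnion l a b ∧ effUnions (ufaUnion l a b) us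

/-- Arc of the union-find forest: from the parent of `c` to `c`, for non-roots `c`. -/
def ufaArc (l : List ℕ) (p c : ℕ) : Prop :=
  c < l.length ∧ parentOf l c = p ∧ p ≠ c

/-- `vs` is the vertex list of a directed walk from `x` to `y` in the forest of `l`. -/
def IsPathVerts (l : List ℕ) (x y : ℕ) (vs : List ℕ) : Prop :=
  vs.head? = some x ∧ vs.getLast? = some y ∧ List.Chain' (ufaArc l) vs

/-- Fuelled computation of the vertices on the path from the representative to `x`. -/
def awalkVertsAux (l : List ℕ) : ℕ → ℕ → List ℕ
  | 0, x => [x]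
  | n + 1, x => if parentOf l x = x then [x] else awalkVertsAux l n (parentOf l x) ++ [x]

/-- The vertices on the path from `repOf l x` to `x`. -/
def awalkVertsFromRep (l : List ℕ) (x : ℕ) : List ℕ := awalkVertsAux l l.length x

/-- Longest common prefix of two lists. -/
def longestCommonPrefix : List ℕ → List ℕ → List ℕ
  | a :: as, b :: bs => if a = b then a :: longestCommonPrefix as bs else []
  | _, _ => []

/-- Lowest common ancestor computation. -/
def ufaLca (l : List ℕ) (x y : ℕ) : ℕ :=
  (longestCommonPrefix (awalkVertsFromRep l x) (awalkVertsFromRep l y)).getLastD 0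

/-- Associated union of an element in the state `(uf, us)`:
the index of the union that set its parent pointer. -/
def auDs (uf : List ℕ) (us : List (ℕ × ℕ)) (z : ℕ) : Option ℕ :=
  if h : us = [] then none
  else
    if z = repOf (ufaUnions uf us.dropLast) (us.getLast h).1 then some us.dropLast.length
    else auDs uf us.dropLast z
termination_by us.length
decreasing_by
  simp only [List.length_dropLast]
  have : us ≠ [] := h
  have := List.length_pos_iff.mpr this
  omega

/-- Max on `Option ℕ` with `none` least. -/
def omax : Option ℕ → Option ℕ → Option ℕ
  | none, b => b
  | some i, none => some i
  | some i, some j => some (max i j)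

/-- Order on `Option ℕ` with `none` least. -/
def ole : Option ℕ → Option ℕ → Prop
  | none, _ => True
  | some _, none => False
  | some i, some j => i ≤ j

/-- Fuelled search for the newest associated union on the path from `d` up to `a`. -/
def findNewestAux (l : List ℕ) (au : ℕ → Option ℕ) : ℕ → ℕ → ℕ → Option ℕ
  | 0, _, _ => none
  | n + 1, a, d => if a = d then none else omax (au d) (findNewestAux l au n a (parentOf l d))

/-- Newest associated union on the path from ancestor `a` down to `d`
in the state `(uf, us)`. -/
def findNewestOnPath (uf : List ℕ) (us : List (ℕ × ℕ)) (a d : ℕ) : Option ℕ :=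
  findNewestAux (ufaUnions uf us) (auDs uf us) (ufaUnions uf us).length a d

/-- The naive explain operation, recursing by rolling back the last union. -/
def explain (uf : List ℕ) (us : List (ℕ × ℕ)) (x y : ℕ) : EqPrf ℕ :=
  if h : us = [] then .refl x
  else
    if repOf (ufaUnions uf us.dropLast) x = repOf (ufaUnions uf us.dropLast) y then
      explain uf us.dropLast x y
    else if repOf (ufaUnions uf us.dropLast) x =
        repOf (ufaUnions uf us.dropLast) (us.getLast h).1 then
      .trans (.trans (explain uf us.dropLast x (us.getLast h).1) (.assm us.dropLast.length))
        (explain uf us.dropLast (us.getLast h).2 y)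
    else
      .trans (.trans (explain uf us.dropLast x (us.getLast h).2)
          (.sym (.assm us.dropLast.length)))
        (explain uf us.dropLast (us.getLast h).1 y)
termination_by us.length
decreasing_by
  all_goals
    simp only [List.length_dropLast]
    have : us ≠ [] := h
    have := List.length_pos_iff.mpr this
    omega

/-- Newest union on the path from the lca to `x`. -/
def newestX (uf : List ℕ) (us : List (ℕ × ℕ)) (x y : ℕ) : Option ℕ :=
  findNewestOnPath uf us (ufaLca (ufaUnions uf us) x y) x

/-- Newest union on the path from the lca to `y`. -/
def newestY (uf : List ℕ) (us : List (ℕ × ℕ)) (x y : ℕ) : Option ℕ :=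
  findNewestOnPath uf us (ufaLca (ufaUnions uf us) x y) y

/-- The union recorded at a given (optional) index. -/
def unionAt (us : List (ℕ × ℕ)) (n : Option ℕ) : ℕ × ℕ := us.getD (n.getD 0) (0, 0)

/-- Domain (termination) predicate of the efficient explain operation. -/
inductive Explain'Dom (uf : List ℕ) (us : List (ℕ × ℕ)) : ℕ → ℕ → Prop where
  | refl (x : ℕ) : Explain'Dom uf us x x
  | newest_x (x y : ℕ) (hne : x ≠ y)
      (hle : ole (newestY uf us x y) (newestX uf us x y))
      (h1 : Explain'Dom uf us x (unionAt us (newestX uf us x y)).1)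
      (h2 : Explain'Dom uf us (unionAt us (newestX uf us x y)).2 y) :
      Explain'Dom uf us x y
  | newest_y (x y : ℕ) (hne : x ≠ y)
      (hgt : ¬ ole (newestY uf us x y) (newestX uf us x y))
      (h1 : Explain'Dom uf us x (unionAt us (newestY uf us x y)).2)
      (h2 : Explain'Dom uf us (unionAt us (newestY uf us x y)).1 y) :
      Explain'Dom uf us x y

/-- Recursion graph of the efficient explain operation `explain'`. -/
inductive Explain'G (uf : List ℕ) (us : List (ℕ × ℕ)) : ℕ → ℕ → EqPrf ℕ → Prop where
  | refl (x : ℕ) : Explain'G uf us x x (.refl x)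
  | newest_x (x y : ℕ) (px py : EqPrf ℕ) (hne : x ≠ y)
      (hle : ole (newestY uf us x y) (newestX uf us x y))
      (h1 : Explain'G uf us x (unionAt us (newestX uf us x y)).1 px)
      (h2 : Explain'G uf us (unionAt us (newestX uf us x y)).2 y py) :
      Explain'G uf us x y
        (.trans (.trans px (.assm ((newestX uf us x y).getD 0))) py)
  | newest_y (x y : ℕ) (px py : EqPrf ℕ) (hne : x ≠ y)
      (hgt : ¬ ole (newestY uf us x y) (newestX uf us x y))
      (h1 : Explain'G uf us x (unionAt us (newestY uf us x y)).2 px)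
      (h2 : Explain'G uf us (unionAt us (newestY uf us x y)).1 y py) :
      Explain'G uf us x y
        (.trans (.trans px (.sym (.assm ((newestY uf us x y).getD 0)))) py)

lemma iterate_parent_lt {l : List ℕ} (h : ufaInvar l) :
    ∀ k i, i < l.length → (parentOf l)^[k] i < l.length := by
  intro k
  induction k with
  | zero => simpa using fun i hi => hi
  | succ k ih =>
    intro i hi
    rw [Function.iterate_succ_apply]
    exact ih _ (h i hi).2

lemma dom_exists {l : List ℕ} {i : ℕ} (h : RepOfDom l i) :
    ∃ k, parentOf l ((parentOf l)^[k] i) = (parentOf l)^[k] i := by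
  induction h with
  | base i h => exact ⟨0, h⟩
  | step i h _ ih2 =>
    obtain ⟨k, hk⟩ := ih2
    exact ⟨k + 1, by rwa [Function.iterate_succ_apply]⟩

lemma find_le {l : List ℕ} (h : ufaInvar l) {i : ℕ} (hi : i < l.length)
    (hex : ∃ k, parentOf l ((parentOf l)^[k] i) = (parentOf l)^[k] i) :
    Nat.find hex ≤ l.length := by
  set f := parentOf l with hf
  set d := Nat.find hex with hd
  have stab : ∀ m, f^[d + m] i = f^[d] i := by
    intro m
    induction m with
    | zero => rfl
    | succ m ih =>
      have : d + (m + 1) = 1 + (d + m) := by omega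
      rw [this, Function.iterate_add_apply, ih]
      simpa using Nat.find_spec hex
  have ginj : Function.Injective (fun k : Fin (d + 1) =>
      (⟨f^[(k : ℕ)] i, iterate_parent_lt h _ i hi⟩ : Fin l.length)) := by
    intro a b hab
    simp only [Fin.mk.injEq] at hab
    by_contra hne
    have hne' : (a : ℕ) ≠ (b : ℕ) := fun hc => hne (Fin.ext hc)
    -- wlog a < b
    rcases Nat.lt_or_ge (a : ℕ) (b : ℕ) with hlt | hge
    · have per : ∀ m, f^[(a : ℕ) + m * ((b : ℕ) - a)] i = f^[(a : ℕ)] i := by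
        intro m
        induction m with
        | zero => simp
        | succ m ih =>
          have : (a : ℕ) + (m + 1) * ((b : ℕ) - a)
              = ((b : ℕ) - a) + ((a : ℕ) + m * ((b : ℕ) - a)) := by ring_nf
          rw [this, Function.iterate_add_apply, ih, ← Function.iterate_add_apply]
          have : (b : ℕ) - a + a = b := by omega
          rw [this, ← hab]
      have hbig : (a : ℕ) + d * ((b : ℕ) - a) ≥ d := by
        have : (b : ℕ) - a ≥ 1 := by omega
        nlinarith
      have h1 : f^[(a : ℕ) + d * ((b : ℕ) - a)] i = f^[d] i := by
        have : (a : ℕ) + d * ((b : ℕ) - a) = d + ((a : ℕ) + d * ((b : ℕ) - a) - d) := by omega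
        rw [this, stab]
      have hroot : f (f^[(a : ℕ)] i) = f^[(a : ℕ)] i := by
        rw [← per d, h1]
        exact Nat.find_spec hex
      have : d ≤ (a : ℕ) := Nat.find_le hroot
      have hbd : (b : ℕ) ≤ d := by omega
      omega
    · have hlt : (b : ℕ) < (a : ℕ) := by omega
      have per : ∀ m, f^[(b : ℕ) + m * ((a : ℕ) - b)] i = f^[(b : ℕ)] i := by
        intro m
        induction m with
        | zero => simp
        | succ m ih =>
          have : (b : ℕ) + (m + 1) * ((a : ℕ) - b)
              = ((a : ℕ) - b) + ((b : ℕ) + m * ((a : ℕ) - b)) := by ring_nf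
          rw [this, Function.iterate_add_apply, ih, ← Function.iterate_add_apply]
          have : (a : ℕ) - b + b = a := by omega
          rw [this, hab]
      have hbig : (b : ℕ) + d * ((a : ℕ) - b) ≥ d := by
        have : (a : ℕ) - b ≥ 1 := by omega
        nlinarith
      have h1 : f^[(b : ℕ) + d * ((a : ℕ) - b)] i = f^[d] i := by
        have : (b : ℕ) + d * ((a : ℕ) - b) = d + ((b : ℕ) + d * ((a : ℕ) - b) - d) := by omega
        rw [this, stab]
      have hroot : f (f^[(b : ℕ)] i) = f^[(b : ℕ)] i := by
        rw [← per d, h1]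
        exact Nat.find_spec hex
      have : d ≤ (b : ℕ) := Nat.find_le hroot
      have : (a : ℕ) ≤ d := by omega
      omega
  have := Fintype.card_le_of_injective _ ginj
  simp at this
  omega

lemma repOfAux_spec (l : List ℕ) : ∀ n i,
    (∃ k, k ≤ n ∧ parentOf l ((parentOf l)^[k] i) = (parentOf l)^[k] i) →
    parentOf l (repOfAux l n i) = repOfAux l n i ∧
      ∃ m, repOfAux l n i = (parentOf l)^[m] i := by
  intro n
  induction n with
  | zero =>
    rintro i ⟨k, hk, hroot⟩
    interval_cases k
    simp only [Function.iterate_zero, id_eq] at hroot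
    exact ⟨hroot, 0, rfl⟩
  | succ n ih =>
    rintro i ⟨k, hk, hroot⟩
    by_cases hpi : parentOf l i = i
    · simp only [repOfAux]
      rw [if_pos hpi]
      exact ⟨hpi, 0, rfl⟩
    · simp only [repOfAux]
      rw [if_neg hpi]
      have hk0 : k ≠ 0 := by
        rintro rfl
        simp only [Function.iterate_zero, id_eq] at hroot
        exact hpi hroot
      obtain ⟨k', rfl⟩ := Nat.exists_eq_succ_of_ne_zero hk0
      obtain ⟨h1, m, h2⟩ := ih (parentOf l i)
        ⟨k', by omega, by rwa [← Function.iterate_succ_apply]⟩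
      exact ⟨h1, m + 1, by rw [h2, Function.iterate_succ_apply]⟩

lemma repOf_spec {l : List ℕ} (h : ufaInvar l) {i : ℕ} (hi : i < l.length) :
    parentOf l (repOf l i) = repOf l i ∧ repOf l i < l.length := by
  have hex := dom_exists (h i hi).1
  have hfind := find_le h hi hex
  obtain ⟨hroot, m, hm⟩ := repOfAux_spec l l.length i ⟨Nat.find hex, hfind, Nat.find_spec hex⟩
  exact ⟨hroot, by rw [repOf, hm]; exact iterate_parent_lt h m i hi⟩

lemma parentOf_set {l : List ℕ} {j v : ℕ} (hj : j < l.length) (i : ℕ) :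
    parentOf (l.set j v) i = if i = j then v else parentOf l i := by
  unfold parentOf
  by_cases hij : i = j
  · subst hij
    simp [List.getD, hj]
  · simp [List.getD, List.getElem?_set_ne (Ne.symm hij), hij]

/-- The union operation preserves the union-find invariant. -/
theorem ufaInvar_ufaUnion (l : List ℕ) (h : ufaInvar l) (x y : ℕ)
    (hx : x < l.length) (hy : y < l.length) :
    ufaInvar (l.set (repOf l x) (repOf l y)) := by
  obtain ⟨hrx, hrxlt⟩ := repOf_spec h hx
  obtain ⟨hry, hrylt⟩ := repOf_spec h hy
  set rx := repOf l x
  set ry := repOf l y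
  have hpar : ∀ i, parentOf (l.set rx ry) i = if i = rx then ry else parentOf l i :=
    parentOf_set hrxlt
  intro i hi
  rw [List.length_set] at hi
  constructor
  · have hdom := (h i hi).1
    clear hi
    induction hdom with
    | base i hroot =>
      by_cases hirx : i = rx
      · by_cases hryi : ry = i
        · exact RepOfDom.base _ (by rw [hpar, if_pos hirx]; exact hryi)
        · refine RepOfDom.step _ (by rw [hpar, if_pos hirx]; exact hryi) ?_
          rw [hpar, if_pos hirx]
          refine RepOfDom.base _ ?_
          rw [hpar, if_neg (by rw [hirx] at hryi; exact hryi)]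
          exact hry
      · exact RepOfDom.base _ (by rw [hpar, if_neg hirx]; exact hroot)
    | step i hne _ ih2 =>
      have hirx : i ≠ rx := fun hc => hne (by rw [hc]; exact hrx)
      refine RepOfDom.step _ ?_ ?_
      · rw [hpar, if_neg hirx]; exact hne
      · rw [hpar, if_neg hirx]; exact ih2
  · rw [List.length_set, hpar]
    by_cases hirx : i = rx
    · simp [hirx, hrylt]
    · simp only [if_neg hirx]
      exact (h i hi).2
end

section
/- Induction principle for union-find-explain states: to prove a property P of every pair (uf, us) where ufa_α uf ⊆ Id and eff_unions uf us holds, it suffices to (1) prove P (uf, []) for every uf with ufa_α uf ⊆ Id, and (2) prove P (uf, us ++ [(a,b)]) from P (uf, us) whenever (a,b) is an effective union for the state ufa_unions uf us. -/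
lemma effUnions_append_single (uf : List ℕ) (us : List (ℕ × ℕ)) (a b : ℕ) :
    effUnions uf (us ++ [(a, b)]) ↔
      effUnions uf us ∧ effUnion (ufaUnions uf us) a b := by
  induction us generalizing uf with
  | nil => simp [effUnions, ufaUnions]
  | cons p us ih =>
    obtain ⟨c, d⟩ := p
    show effUnion uf c d ∧ effUnions (ufaUnion uf c d) (us ++ [(a, b)]) ↔ _
    rw [ih]
    simp only [effUnions, ufaUnions, List.foldl_cons]
    tauto

/-- Induction principle for union-find-explain states. -/
theorem ufe_induct (P : List ℕ → List (ℕ × ℕ) → Prop)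
    (base : ∀ uf : List ℕ, ufaα uf ⊆ {p : ℕ × ℕ | p.1 = p.2} → P uf [])
    (step : ∀ (uf : List ℕ) (us : List (ℕ × ℕ)) (a b : ℕ),
      ufaα uf ⊆ {p : ℕ × ℕ | p.1 = p.2} → effUnions uf us →
      effUnion (ufaUnions uf us) a b → P uf us → P uf (us ++ [(a, b)])) :
    ∀ (uf : List ℕ) (us : List (ℕ × ℕ)),
      ufaα uf ⊆ {p : ℕ × ℕ | p.1 = p.2} → effUnions uf us → P uf us := by
  intro uf us
  induction us using List.reverseRecOn with
  | nil => intro h _; exact base uf h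
  | append_singleton us p ih =>
    obtain ⟨a, b⟩ := p
    intro h heff
    rw [effUnions_append_single] at heff
    exact step uf us a b h heff.1 heff.2 (ih h heff.1)
end

section
/- The union-find forest of a well-formed union-find structure, with vertex set the elements and an edge from parent_of uf x to x for each non-root x, contains no cycles: there is no nonempty directed walk from any vertex to itself. -/
lemma repOfDom_no_cycle (l : List ℕ) (x : ℕ) (hd : RepOfDom l x) :
    ¬ Relation.TransGen (ufaArc l) x x := by
  induction hd with
  | base i hi =>
    intro hcyc
    rcases Relation.TransGen.tail'_iff.mp hcyc with ⟨p, _, harc⟩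
    exact harc.2.2 (harc.2.1 ▸ hi)
  | step i hi _ ih =>
    intro hcyc
    rcases Relation.TransGen.tail'_iff.mp hcyc with ⟨p, htg, harc⟩
    have hp : p = parentOf l i := harc.2.1.symm
    subst hp
    exact ih ((Relation.TransGen.single harc).trans_left htg)

/-- The union-find forest contains no cycles: no nonempty directed walk
from any vertex to itself. -/
theorem ufa_forest_acyclic (l : List ℕ) (h : ufaInvar l) (v : ℕ) :
    ¬ Relation.TransGen (ufaArc l) v v := by
  intro hcyc
  rcases Relation.TransGen.tail'_iff.mp hcyc with ⟨p, _, harc⟩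
  exact repOfDom_no_cycle l v ((h v harc.1).1) hcyc
end
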